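/- The variational approximation D_var is an upper bound on the KL divergence between a density f and a mixture g: KL(f ‖ g) ≤ D_var(f ‖ g) := -log ∑_{i=1}^K π^i·exp(-KL(f ‖ g^i)), where g = ∑_{i=1}^K π^i·g^i. -/

import Mathlib

open MeasureTheory

theorem kl_le_Dvar (K : ℕ)
    (f : ℝ → ℝ) (g : Fin K → ℝ → ℝ) (piw : Fin K → ℝ)
    (hf : ∀ x, 0 ≤ f x) (hfint : ∫ x, f x = 1)
    (hg : ∀ i x, 0 < g i x) (hgint : ∀ i, ∫ x, g i x = 1)
    (hπ : ∀ i, 0 ≤ piw i) (hπs : ∑ i, piw i = 1)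
    (hklint : ∀ i, Integrable (fun x => f x * Real.log (f x / g i x)))
    (hint : Integrable (fun x => f x * Real.log (f x / ∑ i, piw i * g i x))) :
    (∫ x, f x * Real.log (f x / ∑ i, piw i * g i x)) ≤
      -Real.log (∑ i, piw i * Real.exp (-(∫ x, f x * Real.log (f x / g i x)))) := by
  classical
  set D : Fin K → ℝ := fun i => ∫ x, f x * Real.log (f x / g i x) with hD
  set Z : ℝ := ∑ i, piw i * Real.exp (-(D i)) with hZ
  -- f is integrable
  have hfI : Integrable f := by
    by_contra h
    rw [integral_undef h] at hfint; norm_num at hfint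
  -- some weight is positive
  have hex : ∃ i, 0 < piw i := by
    by_contra h
    push_neg at h
    have : ∑ i, piw i = 0 := Finset.sum_eq_zero fun i _ => le_antisymm (h i) (hπ i)
    rw [hπs] at this; norm_num at this
  obtain ⟨i₀, hi₀⟩ := hex
  have hZpos : 0 < Z := by
    refine Finset.sum_pos' (fun i _ => mul_nonneg (hπ i) (Real.exp_pos _).le) ?_
    exact ⟨i₀, Finset.mem_univ _, mul_pos hi₀ (Real.exp_pos _)⟩
  set β : Fin K → ℝ := fun i => piw i * Real.exp (-(D i)) / Z with hβ
  have hβ0 : ∀ i, 0 ≤ β i := fun i =>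
    div_nonneg (mul_nonneg (hπ i) (Real.exp_pos _).le) hZpos.le
  have hβs : ∑ i, β i = 1 := by
    rw [hβ, ← Finset.sum_div, ← hZ, div_self hZpos.ne']
  have hβzero : ∀ i, piw i = 0 → β i = 0 := by
    intro i h; simp [hβ, h]
  have hβpos : ∀ i, 0 < piw i → 0 < β i := fun i h =>
    div_pos (mul_pos h (Real.exp_pos _)) hZpos
  set t : Finset (Fin K) := Finset.univ.filter (fun i => 0 < piw i) with ht
  have hπt : ∀ i ∉ t, piw i = 0 := by
    intro i hi
    simp only [ht, Finset.mem_filter, Finset.mem_univ, true_and, not_lt] at hi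
    exact le_antisymm hi (hπ i)
  have hβst : ∑ i ∈ t, β i = 1 := by
    rw [← hβs]
    exact Finset.sum_subset (Finset.subset_univ t)
      (fun i _ hi => hβzero i (hπt i hi))
  set c : Fin K → ℝ := fun i => Real.log (β i / piw i) with hc
  set G : ℝ → ℝ := fun x => ∑ i, piw i * g i x with hG
  have hGpos : ∀ x, 0 < G x := by
    intro x
    refine Finset.sum_pos' (fun i _ => mul_nonneg (hπ i) (hg i x).le) ?_
    exact ⟨i₀, Finset.mem_univ _, mul_pos hi₀ (hg i₀ x)⟩
  -- pointwise inequality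
  have key : ∀ x, f x * Real.log (f x / G x) ≤
      ∑ i, β i * (f x * Real.log (f x / g i x) + c i * f x) := by
    intro x
    rcases eq_or_lt_of_le (hf x) with hx | hx
    · simp [← hx]
    · have hGx := hGpos x
      set p : Fin K → ℝ := fun i => piw i * g i x / (β i * f x) with hp
      have hppos : ∀ i ∈ t, 0 < p i := by
        intro i hi
        simp only [ht, Finset.mem_filter, Finset.mem_univ, true_and] at hi
        exact div_pos (mul_pos hi (hg i x)) (mul_pos (hβpos i hi) hx)
      have jensen : ∑ i ∈ t, β i * Real.log (p i) ≤ Real.log (G x / f x) := by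
        have := strictConcaveOn_log_Ioi.concaveOn.le_map_sum
          (t := t) (w := β) (p := p) (fun i _ => hβ0 i) hβst
          (fun i hi => hppos i hi)
        simp only [smul_eq_mul] at this
        refine this.trans_eq ?_
        congr 1
        have : ∀ i ∈ t, β i * p i = piw i * g i x / f x := by
          intro i hi
          simp only [ht, Finset.mem_filter, Finset.mem_univ, true_and] at hi
          have hβi := (hβpos i hi).ne'
          simp only [hp]; rw [mul_div_assoc', mul_div_mul_left _ _ hβi]
        rw [Finset.sum_congr rfl this]
        rw [← Finset.sum_div, hG]
        congr 1
        exact Finset.sum_subset (Finset.subset_univ t)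
          (fun i _ hi => by rw [hπt i hi]; ring)
      have hneg : ∀ i ∈ t, -(β i * Real.log (p i)) =
          β i * (Real.log (f x / g i x) + c i) := by
        intro i hi
        simp only [ht, Finset.mem_filter, Finset.mem_univ, true_and] at hi
        have hβi := hβpos i hi
        have h1 : Real.log (p i) = Real.log (piw i) + Real.log (g i x)
            - (Real.log (β i) + Real.log (f x)) := by
          rw [hp]
          rw [Real.log_div (mul_pos hi (hg i x)).ne' (mul_pos hβi hx).ne',
            Real.log_mul hi.ne' (hg i x).ne', Real.log_mul hβi.ne' hx.ne']
        have h2 : Real.log (f x / g i x) = Real.log (f x) - Real.log (g i x) :=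
          Real.log_div hx.ne' (hg i x).ne'
        have h3 : c i = Real.log (β i) - Real.log (piw i) := by
          rw [hc]; exact Real.log_div hβi.ne' hi.ne'
        rw [h1, h2, h3]; ring
      have step : Real.log (f x / G x) ≤
          ∑ i, β i * (Real.log (f x / g i x) + c i) := by
        have h4 : Real.log (f x / G x) = -Real.log (G x / f x) := by
          rw [← Real.log_inv]; congr 1; field_simp
        rw [h4]
        calc -Real.log (G x / f x) ≤ -∑ i ∈ t, β i * Real.log (p i) :=
              neg_le_neg jensen
          _ = ∑ i ∈ t, β i * (Real.log (f x / g i x) + c i) := by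
              rw [← Finset.sum_neg_distrib]
              exact Finset.sum_congr rfl hneg
          _ = ∑ i, β i * (Real.log (f x / g i x) + c i) :=
              Finset.sum_subset (Finset.subset_univ t)
                (fun i _ hi => by rw [hβzero i (hπt i hi)]; ring)
      calc f x * Real.log (f x / G x)
          ≤ f x * ∑ i, β i * (Real.log (f x / g i x) + c i) :=
            mul_le_mul_of_nonneg_left step hx.le
        _ = ∑ i, β i * (f x * Real.log (f x / g i x) + c i * f x) := by
            rw [Finset.mul_sum]; exact Finset.sum_congr rfl fun i _ => by ring
  -- integrate
  have hRint : ∀ i : Fin K, Integrable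
      (fun x => β i * (f x * Real.log (f x / g i x) + c i * f x)) := by
    intro i
    exact (((hklint i).add (hfI.const_mul (c i))).const_mul (β i))
  have hineq : (∫ x, f x * Real.log (f x / G x)) ≤
      ∫ x, ∑ i, β i * (f x * Real.log (f x / g i x) + c i * f x) := by
    refine integral_mono hint (integrable_finset_sum _ fun i _ => hRint i) key
  have hval : (∫ x, ∑ i, β i * (f x * Real.log (f x / g i x) + c i * f x))
      = -Real.log Z := by
    rw [integral_finset_sum _ fun i _ => hRint i]
    have : ∀ i : Fin K,
        (∫ x, β i * (f x * Real.log (f x / g i x) + c i * f x))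
        = β i * (-Real.log Z) := by
      intro i
      rw [integral_const_mul, integral_add (hklint i) (hfI.const_mul (c i)),
        integral_const_mul, hfint]
      have hDi : (∫ a, f a * Real.log (f a / g i a)) = D i := rfl
      rw [hDi]
      rcases eq_or_lt_of_le (hπ i) with h | h
      · rw [hβzero i h.symm]; ring
      · have : c i = -(D i) - Real.log Z := by
          have hb : β i / piw i = Real.exp (-(D i)) / Z := by
            rw [hβ]; field_simp
          show Real.log (β i / piw i) = -(D i) - Real.log Z
          rw [hb, Real.log_div (Real.exp_pos _).ne' hZpos.ne', Real.log_exp]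
        rw [this]; ring
    rw [Finset.sum_congr rfl fun i _ => this i, ← Finset.sum_mul, hβs]
    ring
  calc (∫ x, f x * Real.log (f x / ∑ i, piw i * g i x))
      = ∫ x, f x * Real.log (f x / G x) := rfl
    _ ≤ _ := hineq
    _ = -Real.log Z := hval
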